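/- arXiv:1001.3972 — 3 statements merged into one kernel-verified Lean document; each statement's English description precedes it below -/
import Mathlib

section
/- Let λ be a σ-finite measure on a measurable space (Y, 𝒴) carrying a transitive measurable binary relation < such that at most one of y < z and z < y holds and λ([y]) = 0 for all y ∈ Y. Let n ≥ 1 and let g : Yⁿ × Y → ℝ be measurable, square-integrable with respect to λ^{n+1}, symmetric in its first n arguments, and such that g(y₁, …, yₙ, y) = 0 unless yᵢ < y for every i ∈ {1, …, n}. Define the symmetrization g̃(y₁, …, y_{n+1}) := (n+1)⁻¹ Σ_{i=1}^{n+1} g(y₁, …, y_{i−1}, y_{i+1}, …, y_{n+1}, yᵢ). Then ∫ g̃² dλ^{n+1} = (n+1)⁻¹ ∫ g² dλ^{n+1}. -/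
/-!
Write `aᵢ(w) := g(w ∘ succAbove i, wᵢ)`. If `i ≠ j`, then `wⱼ` is among the first arguments of `aᵢ`
and `wᵢ` among those of `aⱼ`; asymmetry of `<` forbids both `wⱼ < wᵢ` and `wᵢ < wⱼ`, so
`aᵢ aⱼ = 0` pointwise. Hence `(∑ aᵢ)² = ∑ aᵢ²`, and since `w ↦ (w ∘ succAbove i, wᵢ)` carries
`λ^{n+1}` to `λⁿ ⊗ λ`, each `aᵢ²` integrates to `∫ g²`; the factor `(n+1)⁻² · (n+1)` remains.
-/

open MeasureTheory
open scoped ENNReal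

theorem Finset.sq_sum_eq_sum_sq_of_mul_eq_zero {ι R : Type*} [CommSemiring R] (s : Finset ι)
    (f : ι → R) (h : ∀ i ∈ s, ∀ j ∈ s, i ≠ j → f i * f j = 0) :
    (∑ i ∈ s, f i) ^ 2 = ∑ i ∈ s, f i ^ 2 := by
  rw [sq, Finset.sum_mul_sum]
  refine Finset.sum_congr rfl fun i hi => ?_
  rw [Finset.sum_eq_single_of_mem i hi fun j hj hji => h i hi j hj hji.symm, sq]

theorem MeasureTheory.lintegral_ofReal_sq_sum_of_mul_eq_zero {α ι : Type*} [MeasurableSpace α]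
    (μ : Measure α) (s : Finset ι) (f : ι → α → ℝ) (hf : ∀ i ∈ s, Measurable (f i))
    (h : ∀ x, ∀ i ∈ s, ∀ j ∈ s, i ≠ j → f i x * f j x = 0) :
    ∫⁻ x, ENNReal.ofReal ((∑ i ∈ s, f i x) ^ 2) ∂μ
      = ∑ i ∈ s, ∫⁻ x, ENNReal.ofReal (f i x ^ 2) ∂μ := by
  simp_rw [Finset.sq_sum_eq_sum_sq_of_mul_eq_zero s _ (h _),
    ENNReal.ofReal_sum_of_nonneg fun i _ => sq_nonneg _]
  exact lintegral_finsetSum s fun i hi => ((hf i hi).pow_const 2).ennreal_ofReal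

theorem MeasureTheory.measurePreserving_succAbove_prod {Y : Type*} [MeasurableSpace Y]
    (μ : Measure Y) [SigmaFinite μ] {n : ℕ} (i : Fin (n + 1)) :
    MeasurePreserving (fun w : Fin (n + 1) → Y => (fun j => w (i.succAbove j), w i))
      (Measure.pi fun _ => μ) ((Measure.pi fun _ : Fin n => μ).prod μ) :=
  Measure.measurePreserving_swap.comp (measurePreserving_piFinSuccAbove (fun _ => μ) i)

theorem MeasureTheory.lintegral_comp_succAbove_prod {Y : Type*} [MeasurableSpace Y]
    (μ : Measure Y) [SigmaFinite μ] {n : ℕ} (i : Fin (n + 1)) (f : (Fin n → Y) × Y → ℝ≥0∞) :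
    ∫⁻ w, f (fun j => w (i.succAbove j), w i) ∂(Measure.pi fun _ => μ)
      = ∫⁻ p, f p ∂((Measure.pi fun _ : Fin n => μ).prod μ) :=
  (measurePreserving_succAbove_prod μ i).lintegral_comp_emb
    (MeasurableEquiv.prodComm.measurableEmbedding.comp
      (MeasurableEquiv.piFinSuccAbove _ i).measurableEmbedding) f

theorem mul_eq_zero_of_ne_of_eq_zero_unless_lt {Y R : Type*} [MulZeroClass R]
    {lt : Y → Y → Prop} (hlt_asymm : ∀ y z : Y, lt y z → ¬ lt z y) {n : ℕ}
    {g : (Fin n → Y) → Y → R}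
    (hg_vanish : ∀ (v : Fin n → Y) (y : Y), (∃ i, ¬ lt (v i) y) → g v y = 0)
    (w : Fin (n + 1) → Y) {i j : Fin (n + 1)} (hij : i ≠ j) :
    g (fun k => w (i.succAbove k)) (w i) * g (fun k => w (j.succAbove k)) (w j) = 0 := by
  by_cases h : lt (w j) (w i)
  · obtain ⟨k, hk⟩ := Fin.exists_succAbove_eq hij
    rw [hg_vanish (fun k => w (j.succAbove k)) (w j)
      ⟨k, by simpa [hk] using hlt_asymm _ _ h⟩, mul_zero]
  · obtain ⟨k, hk⟩ := Fin.exists_succAbove_eq hij.symm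
    rw [hg_vanish (fun k => w (i.succAbove k)) (w i) ⟨k, by simpa [hk] using h⟩, zero_mul]

theorem ENNReal.ofReal_inv_natCast_add_one_sq_mul (n : ℕ) :
    ENNReal.ofReal ((((n : ℝ) + 1)⁻¹) ^ 2) * ((n : ℝ≥0∞) + 1) = ((n : ℝ≥0∞) + 1)⁻¹ := by
  have hcast : ENNReal.ofReal ((n : ℝ) + 1) = (n : ℝ≥0∞) + 1 := by
    exact_mod_cast ENNReal.ofReal_natCast (n + 1)
  rw [← hcast, ← ENNReal.ofReal_inv_of_pos (by positivity),
    ← ENNReal.ofReal_mul (by positivity)]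
  congr 1
  field_simp

theorem symmetrization_sq_lintegral_general {Y : Type*} [MeasurableSpace Y]
    (lam : Measure Y) [SigmaFinite lam]
    (lt : Y → Y → Prop)
    (hlt_asymm : ∀ y z : Y, lt y z → ¬ lt z y)
    (n : ℕ)
    (g : (Fin n → Y) → Y → ℝ)
    (hg_meas : Measurable fun p : (Fin n → Y) × Y => g p.1 p.2)
    (hg_vanish : ∀ (v : Fin n → Y) (y : Y), (∃ i, ¬ lt (v i) y) → g v y = 0) :
    ∫⁻ w, ENNReal.ofReal
        ((((n : ℝ) + 1)⁻¹ * ∑ i : Fin (n + 1), g (fun j => w (i.succAbove j)) (w i)) ^ 2)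
        ∂(Measure.pi fun _ : Fin (n + 1) => lam)
      = ((n : ℝ≥0∞) + 1)⁻¹
        * ∫⁻ p, ENNReal.ofReal ((g p.1 p.2) ^ 2)
            ∂((Measure.pi fun _ : Fin n => lam).prod lam) := by
  have hterm_meas (i : Fin (n + 1)) :
      Measurable fun w : Fin (n + 1) → Y => g (fun j => w (i.succAbove j)) (w i) :=
    hg_meas.comp (measurePreserving_succAbove_prod lam i).measurable
  simp_rw [mul_pow, ENNReal.ofReal_mul (sq_nonneg _)]
  rw [lintegral_const_mul' _ _ ENNReal.ofReal_ne_top,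
    lintegral_ofReal_sq_sum_of_mul_eq_zero _ _ _ (fun i _ => hterm_meas i)
      fun w i _ j _ hij => mul_eq_zero_of_ne_of_eq_zero_unless_lt hlt_asymm hg_vanish w hij]
  simp_rw [lintegral_comp_succAbove_prod lam _ fun p => ENNReal.ofReal (g p.1 p.2 ^ 2)]
  rw [Finset.sum_const, Finset.card_univ, Fintype.card_fin, nsmul_eq_mul, ← mul_assoc]
  push_cast
  rw [ENNReal.ofReal_inv_natCast_add_one_sq_mul]

/-- computation in Proposition 2.2 of Last-Penrose: for `g` symmetric in
its first `n` arguments, square integrable, and vanishing unless each of the first `n`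
arguments is below the last one, the symmetrization `g̃` satisfies
`∫ g̃² dλ^{n+1} = (n+1)⁻¹ ∫ g² dλ^{n+1}`. -/
theorem symmetrization_sq_lintegral {Y : Type*} [MeasurableSpace Y]
    (lam : Measure Y) [SigmaFinite lam]
    (lt : Y → Y → Prop) (hlt_trans : Transitive lt)
    (hlt_meas : MeasurableSet {p : Y × Y | lt p.1 p.2})
    (hlt_asymm : ∀ y z : Y, lt y z → ¬ lt z y)
    (hlt_ae : ∀ y : Y, lam {z | ¬ lt z y ∧ ¬ lt y z} = 0)
    (n : ℕ) (hn : 1 ≤ n)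
    (g : (Fin n → Y) → Y → ℝ)
    (hg_meas : Measurable fun p : (Fin n → Y) × Y => g p.1 p.2)
    (hg_L2 : ∫⁻ p, ENNReal.ofReal ((g p.1 p.2) ^ 2)
        ∂((Measure.pi fun _ : Fin n => lam).prod lam) < ⊤)
    (hg_symm : ∀ (σ : Equiv.Perm (Fin n)) (v : Fin n → Y) (y : Y), g (v ∘ σ) y = g v y)
    (hg_vanish : ∀ (v : Fin n → Y) (y : Y), (∃ i, ¬ lt (v i) y) → g v y = 0) :
    ∫⁻ w, ENNReal.ofReal
        ((((n : ℝ) + 1)⁻¹ * ∑ i : Fin (n + 1), g (fun j => w (i.succAbove j)) (w i)) ^ 2)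
        ∂(Measure.pi fun _ : Fin (n + 1) => lam)
      = ((n : ℝ≥0∞) + 1)⁻¹
        * ∫⁻ p, ENNReal.ofReal ((g p.1 p.2) ^ 2)
            ∂((Measure.pi fun _ : Fin n => lam).prod lam) :=
  symmetrization_sq_lintegral_general lam lt hlt_asymm n g hg_meas hg_vanish
end

section
/- Let λ be a σ-finite measure on a measurable space (Y, 𝒴) carrying a transitive measurable binary relation < such that at most one of y < z and z < y holds and λ([y]) = 0 for all y ∈ Y. Then for every n ≥ 2, λⁿ-almost every tuple (y₁, …, yₙ) ∈ Yⁿ is strictly ordered after a permutation: the complement in Yⁿ of the union over all permutations σ of {1, …, n} of the sets {(y₁, …, yₙ) : y_{σ(1)} < y_{σ(2)} < ⋯ < y_{σ(n)}} is a λⁿ-null set. -/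
/-!
Off the set of tuples having two incomparable coordinates, `<` restricts to a strict total
order on the coordinates, and sorting along it yields the permutation. Each set
`{v | v i, v j incomparable}` with `i ≠ j` is null by Tonelli: fixing every coordinate but
`v i`, the section in `v i` is `[v j]`, which is `λ`-null.
-/

open MeasureTheory

theorem exists_equiv_fin_of_isStrictTotalOrder {ι : Type*} [Fintype ι] {n : ℕ}
    (hn : Fintype.card ι = n) (r : ι → ι → Prop) [IsStrictTotalOrder ι r] :
    ∃ e : Fin n ≃ ι, ∀ i j, i < j → r (e i) (e j) := by
  classical
  let := linearOrderOfSTO r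
  exact ⟨(Fintype.orderIsoFinOfCardEq ι hn).toEquiv,
    fun _ _ h => (Fintype.orderIsoFinOfCardEq ι hn).strictMono h⟩

theorem measure_pi_preimage_pair_null {Y : Type*} [MeasurableSpace Y] (lam : Measure Y)
    [SigmaFinite lam] {s : Set (Y × Y)} (hs : MeasurableSet s)
    (hnull : ∀ y, lam {x | (x, y) ∈ s} = 0) {n : ℕ} {i j : Fin n} (hij : i ≠ j) :
    Measure.pi (fun _ : Fin n => lam) {v | (v i, v j) ∈ s} = 0 := by
  obtain ⟨m, rfl⟩ := Nat.exists_eq_succ_of_ne_zero i.pos.ne'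
  obtain ⟨j, rfl⟩ := Fin.exists_succAbove_eq hij.symm
  have hT : MeasurableSet {p : Y × (Fin m → Y) | (p.1, p.2 j) ∈ s} :=
    (measurable_fst.prodMk ((measurable_pi_apply j).comp measurable_snd)) hs
  have hpre : {v : Fin (m + 1) → Y | (v i, v (i.succAbove j)) ∈ s} =
      MeasurableEquiv.piFinSuccAbove (fun _ => Y) i ⁻¹' {p | (p.1, p.2 j) ∈ s} := rfl
  rw [hpre, (measurePreserving_piFinSuccAbove (fun _ => lam) i).measure_preimage
    hT.nullMeasurableSet, Measure.prod_apply_symm hT]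
  simp [hnull]

/-- if `λ([y]) = 0` for all `y`, then `λⁿ`-almost every tuple in `Yⁿ`
is strictly ordered after a permutation of its coordinates. -/
theorem ae_strictly_ordered {Y : Type*} [MeasurableSpace Y]
    (lam : Measure Y) [SigmaFinite lam]
    (lt : Y → Y → Prop) (hlt_trans : Transitive lt)
    (hlt_meas : MeasurableSet {p : Y × Y | lt p.1 p.2})
    (hlt_asymm : ∀ y z : Y, lt y z → ¬ lt z y)
    (hlt_ae : ∀ y : Y, lam {z | ¬ lt z y ∧ ¬ lt y z} = 0) :
    ∀ n : ℕ, 2 ≤ n →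
      (Measure.pi fun _ : Fin n => lam)
        ((⋃ σ : Equiv.Perm (Fin n),
          {v : Fin n → Y | ∀ i j : Fin n, i < j → lt (v (σ i)) (v (σ j))})ᶜ) = 0 := by
  intro n _
  let incomparable : Set (Y × Y) := {p | ¬ lt p.1 p.2 ∧ ¬ lt p.2 p.1}
  have hmeas : MeasurableSet incomparable :=
    hlt_meas.compl.inter (measurable_swap hlt_meas).compl
  have hnull : Measure.pi (fun _ : Fin n => lam)
      (⋃ (i : Fin n) (j : Fin n) (_ : i ≠ j), {v | (v i, v j) ∈ incomparable}) = 0 :=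
    measure_iUnion_null fun _ => measure_iUnion_null fun _ =>
      measure_iUnion_null fun hij => measure_pi_preimage_pair_null lam hmeas hlt_ae hij
  refine measure_mono_null (fun v hv => ?_) hnull
  by_contra hcomparable
  simp only [Set.mem_iUnion, Set.mem_ofPred_eq, not_exists, incomparable] at hcomparable
  have : IsStrictTotalOrder (Fin n) (fun a b => lt (v a) (v b)) :=
    { trichotomous := fun a b hab hba => by_contra fun h => hcomparable a b h ⟨hab, hba⟩
      irrefl := fun _ h => hlt_asymm _ _ h h
      trans := fun _ _ _ => @hlt_trans _ _ _ }
  obtain ⟨σ, hσ⟩ := exists_equiv_fin_of_isStrictTotalOrder (Fintype.card_fin n)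
    (fun a b => lt (v a) (v b))
  exact hv (Set.mem_iUnion.2 ⟨σ, hσ⟩)
end

section
/- Let η be a Poisson process on Y = [0,∞) × X with σ-finite intensity measure λ satisfying λ({t} × X) = 0 for all t ≥ 0. Then for every t ≥ 0 and every measurable f : N → ℝ with 𝔼 |f(η)| < ∞, the conditional expectations with respect to σ(η_t) and σ(η_{t−}) agree: 𝔼[f(η) | σ(η_t)] = 𝔼[f(η) | σ(η_{t−})] ℙ-almost surely. -/
open MeasureTheory ProbabilityTheory
open scoped NNReal ENNReal

noncomputable section

/-- `η` is a Poisson process on `Y` with intensity measure `lam`, defined on the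
probability space `(Ω, P)`: `η` is measurable, `η B` is Poisson distributed with
mean `lam B` for every measurable `B` (taking the value `∞` a.s. when `lam B = ∞`),
and the counts of pairwise disjoint sets are independent. -/
def IsPoissonProcess {Ω Y : Type*} [MeasurableSpace Ω] [MeasurableSpace Y]
    (P : Measure Ω) (lam : Measure Y) (η : Ω → Measure Y) : Prop :=
  Measurable η ∧
  (∀ B : Set Y, MeasurableSet B → lam B ≠ ⊤ → ∀ k : ℕ,
      P {ω | η ω B = k} = ENNReal.ofReal (poissonPMFReal (lam B).toNNReal k)) ∧
  (∀ B : Set Y, MeasurableSet B → lam B = ⊤ → ∀ᵐ ω ∂P, η ω B = ⊤) ∧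
  (∀ (n : ℕ) (B : Fin n → Set Y), (∀ i, MeasurableSet (B i)) →
      Pairwise (Function.onFun Disjoint B) →
      iIndepFun (fun i ω => η ω (B i)) P)

/-! The two conditioning maps `ω ↦ η_t` and `ω ↦ η_{t-}` differ only through the count of
`{t} × X`, which is Poisson with mean `λ({t} × X) = 0`, so they agree almost surely; and
`η_{t-}` is a function of `η_t`. Conditioning on a map or on an a.s. equal coarser one gives
the same result. -/

namespace MeasureTheory.Measure

variable {Y : Type*} [MeasurableSpace Y]

lemma measurable_restrict {S : Set Y} (hS : MeasurableSet S) :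
    Measurable fun μ : Measure Y => μ.restrict S :=
  measurable_of_measurable_coe _ fun s hs => by
    simp_rw [restrict_apply hs]
    exact measurable_coe (hs.inter hS)

lemma restrict_eq_restrict_of_subset_of_measure_diff_eq_zero {μ : Measure Y} {S T : Set Y}
    (hST : S ⊆ T) (hdiff : μ (T \ S) = 0) : μ.restrict T = μ.restrict S := by
  refine restrict_congr_set (ae_eq_set.2 ⟨hdiff, ?_⟩)
  rw [Set.sdiff_eq_empty.2 hST, measure_empty]

end MeasureTheory.Measure

lemma MeasurableSpace.comap_restrict_le_comap_restrict {Ω Y : Type*} [MeasurableSpace Y]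
    (η : Ω → Measure Y) {S T : Set Y} (hS : MeasurableSet S) (hST : S ⊆ T) :
    MeasurableSpace.comap (fun ω => (η ω).restrict S) inferInstance
      ≤ MeasurableSpace.comap (fun ω => (η ω).restrict T) inferInstance :=
  comap_le_comap_of_eq_comp _ (Measure.measurable_restrict hS)
    (funext fun _ => (Measure.restrict_restrict_of_subset hST).symm)

lemma IsPoissonProcess.ae_eq_zero_of_intensity_eq_zero {Ω Y : Type*} [MeasurableSpace Ω]
    [MeasurableSpace Y] {P : Measure Ω} [IsProbabilityMeasure P] {lam : Measure Y}
    {η : Ω → Measure Y} (hη : IsPoissonProcess P lam η) {B : Set Y} (hB : MeasurableSet B)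
    (hlam : lam B = 0) : ∀ᵐ ω ∂P, η ω B = 0 := by
  have hprob : P {ω | η ω B = ((0 : ℕ) : ℝ≥0∞)} = 1 := by
    rw [hη.2.1 B hB (by simp [hlam]) 0, hlam]
    simp [poissonPMFReal]
  have hmeas : MeasurableSet {ω | η ω B = ((0 : ℕ) : ℝ≥0∞)} :=
    (Measure.measurable_coe hB).comp hη.1 (measurableSet_singleton _)
  simpa using (ae_iff_measure_eq hmeas.nullMeasurableSet).2 (by rw [hprob, measure_univ])

lemma condExp_comap_ae_eq_of_ae_eq {Ω α : Type*} {mΩ : MeasurableSpace Ω}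
    {mα : MeasurableSpace α} {P : Measure Ω} [IsFiniteMeasure P]
    {F G : Ω → α} (hF : Measurable F) (hG : Measurable G)
    (hle : MeasurableSpace.comap G mα ≤ MeasurableSpace.comap F mα) (hFG : F =ᵐ[P] G)
    {f : Ω → ℝ} (hf : Integrable f P) :
    P[f | MeasurableSpace.comap F mα] =ᵐ[P] P[f | MeasurableSpace.comap G mα] := by
  refine (ae_eq_condExp_of_forall_setIntegral_eq hF.comap_le hf
    (fun s _ _ => integrable_condExp.integrableOn) (fun s hs _ => ?_)
    (stronglyMeasurable_condExp.mono hle).aestronglyMeasurable).symm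
  obtain ⟨B, hB, rfl⟩ := hs
  have hpre : F ⁻¹' B =ᵐ[P] G ⁻¹' B := hFG.fun_comp (· ∈ B)
  calc ∫ ω in F ⁻¹' B, (P[f | MeasurableSpace.comap G mα]) ω ∂P
      = ∫ ω in G ⁻¹' B, (P[f | MeasurableSpace.comap G mα]) ω ∂P :=
        setIntegral_congr_set hpre
    _ = ∫ ω in G ⁻¹' B, f ω ∂P := setIntegral_condExp hG.comap_le hf ⟨B, hB, rfl⟩
    _ = ∫ ω in F ⁻¹' B, f ω ∂P := (setIntegral_congr_set hpre).symm

theorem condexp_restrict_le_eq_condexp_restrict_lt_general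
    {Ω X : Type*} [MeasurableSpace Ω] [MeasurableSpace X]
    (P : Measure Ω) [IsProbabilityMeasure P]
    (lam : Measure (ℝ≥0 × X))
    (hdiff : ∀ t : ℝ≥0, lam ({t} ×ˢ (Set.univ : Set X)) = 0)
    (η : Ω → Measure (ℝ≥0 × X)) (hη : IsPoissonProcess P lam η) :
    ∀ t : ℝ≥0, ∀ f : Measure (ℝ≥0 × X) → ℝ, Measurable f →
      Integrable (fun ω => f (η ω)) P →
      ∀ᵐ ω ∂P,
        (P[fun ω' => f (η ω') |
            MeasurableSpace.comap (fun ω' => (η ω').restrict {p | p.1 ≤ t}) inferInstance]) ω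
        = (P[fun ω' => f (η ω') |
            MeasurableSpace.comap (fun ω' => (η ω').restrict {p | p.1 < t}) inferInstance]) ω := by
  intro t f _ hf
  have hle : MeasurableSet {p : ℝ≥0 × X | p.1 ≤ t} :=
    measurableSet_le measurable_fst measurable_const
  have hlt : MeasurableSet {p : ℝ≥0 × X | p.1 < t} :=
    measurableSet_lt measurable_fst measurable_const
  have hlt_sub_le : {p : ℝ≥0 × X | p.1 < t} ⊆ {p | p.1 ≤ t} :=
    fun _ hp => le_of_lt (α := ℝ≥0) hp
  have hdiff_eq : {p : ℝ≥0 × X | p.1 ≤ t} \ {p | p.1 < t} = {t} ×ˢ Set.univ := by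
    ext p
    simp [le_antisymm_iff]
  have hatom : ∀ᵐ ω ∂P, η ω ({t} ×ˢ Set.univ) = 0 :=
    hη.ae_eq_zero_of_intensity_eq_zero ((measurableSet_singleton t).prod .univ) (hdiff t)
  refine condExp_comap_ae_eq_of_ae_eq ((Measure.measurable_restrict hle).comp hη.1)
    ((Measure.measurable_restrict hlt).comp hη.1)
    (MeasurableSpace.comap_restrict_le_comap_restrict η hlt hlt_sub_le) ?_ hf
  filter_upwards [hatom] with ω hω
  exact Measure.restrict_eq_restrict_of_subset_of_measure_diff_eq_zero hlt_sub_le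
    (hdiff_eq ▸ hω)

/-- observation in the proof of Theorem 3.1 of Last-Penrose: since
`λ({t} × X) = 0`, conditioning on `η_t` (restriction to `[0,t] × X`) and on `η_{t-}`
(restriction to `[0,t) × X`) give the same conditional expectation. -/
theorem condexp_restrict_le_eq_condexp_restrict_lt
    {Ω X : Type*} [MeasurableSpace Ω] [MeasurableSpace X]
    (P : Measure Ω) [IsProbabilityMeasure P]
    (lam : Measure (ℝ≥0 × X)) [SigmaFinite lam]
    (hdiff : ∀ t : ℝ≥0, lam ({t} ×ˢ (Set.univ : Set X)) = 0)
    (η : Ω → Measure (ℝ≥0 × X)) (hη : IsPoissonProcess P lam η) :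
    ∀ t : ℝ≥0, ∀ f : Measure (ℝ≥0 × X) → ℝ, Measurable f →
      Integrable (fun ω => f (η ω)) P →
      ∀ᵐ ω ∂P,
        (P[fun ω' => f (η ω') |
            MeasurableSpace.comap (fun ω' => (η ω').restrict {p | p.1 ≤ t}) inferInstance]) ω
        = (P[fun ω' => f (η ω') |
            MeasurableSpace.comap (fun ω' => (η ω').restrict {p | p.1 < t}) inferInstance]) ω :=
  condexp_restrict_le_eq_condexp_restrict_lt_general P lam hdiff η hη
end
end
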